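/- The Cartesian product of the canopy tree with Z has exactly one end. -/

import Mathlib

/-!
Every finite set of vertices of `G □ H` lies in a box `F × E`, and when `G` and `H` are connected
and infinite the complement of a box is connected: a vertex outside it has a coordinate `a ∉ F` or
`b ∉ E`, so its whole column or row avoids the box and leads to the row or column through a fixed
vertex `(a₀, b₀)` with `a₀ ∉ F`, `b₀ ∉ E`. Finite sets with connected complement being cofinal,
any two ends agree on each of them, hence everywhere, and choosing for each finite set the
component containing such a complement gives an end. The canopy tree and the line `ℤ` are
connected and infinite, and `prodZ G = G □ hasse ℤ`.
-/

open MeasureTheory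

/-- The subgraph of `G` spanned by open vertices in configuration `ω`. -/
def percSubgraph {V : Type*} (G : SimpleGraph V) (ω : V → Bool) : SimpleGraph V where
  Adj a b := G.Adj a b ∧ ω a = true ∧ ω b = true
  symm := ⟨fun a b ⟨h, ha, hb⟩ => ⟨h.symm, hb, ha⟩⟩
  loopless := ⟨fun a ⟨h, _, _⟩ => G.irrefl h⟩

/-- The open cluster of `v`: vertices reachable from `v` in the open subgraph
(empty if `v` is closed). -/
def openCluster {V : Type*} (G : SimpleGraph V) (ω : V → Bool) (v : V) : Set V :=
  {w | ω v = true ∧ (percSubgraph G ω).Reachable v w}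

/-- `μ` is Bernoulli(p) site percolation: cylinder events have product probabilities. -/
def IsBernoulli {V : Type*} (μ : Measure (V → Bool)) (p : ℝ) : Prop :=
  ∀ (S : Finset V) (g : V → Bool),
    μ {ω | ∀ v ∈ S, ω v = g v} = ∏ v ∈ S, ENNReal.ofReal (if g v = true then p else 1 - p)

/-- Vertices of the canopy tree: at level `n`, the binary tree of depth `n`
(vertices = binary strings of length ≤ n) attached at the ray vertex `⟨n, []⟩`. -/
abbrev CanopyV : Type := Σ n : ℕ, {l : List Bool // l.length ≤ n}

/-- The canopy tree: the infinite ray `v_n = ⟨n, []⟩`, with a complete binary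
tree of depth `n` rooted at `v_n`. -/
def canopyTree : SimpleGraph CanopyV where
  Adj a b :=
    (a.1 = b.1 ∧ ∃ x, b.2.val = a.2.val ++ [x] ∨ a.2.val = b.2.val ++ [x])
    ∨ (a.2.val = [] ∧ b.2.val = [] ∧ (a.1 = b.1 + 1 ∨ b.1 = a.1 + 1))
  symm := by
    constructor
    rintro a b (⟨h1, x, h2⟩ | ⟨h1, h2, h3⟩)
    · exact Or.inl ⟨h1.symm, x, h2.symm⟩
    · exact Or.inr ⟨h2, h1, h3.symm⟩
  loopless := by
    constructor
    rintro a (⟨_, x, h | h⟩ | ⟨_, _, h | h⟩) <;> first | simp at h | omega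

/-- The Cartesian product of a graph with the bi-infinite line `ℤ`. -/
def prodZ {V : Type*} (G : SimpleGraph V) : SimpleGraph (V × ℤ) where
  Adj a b := (a.1 = b.1 ∧ (a.2 = b.2 + 1 ∨ b.2 = a.2 + 1)) ∨ (G.Adj a.1 b.1 ∧ a.2 = b.2)
  symm := by
    constructor
    rintro a b (⟨h1, h2⟩ | ⟨h1, h2⟩)
    · exact Or.inl ⟨h1.symm, h2.symm⟩
    · exact Or.inr ⟨h1.symm, h2.symm⟩
  loopless := by
    constructor
    rintro a (⟨_, h | h⟩ | ⟨h, _⟩)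
    · omega
    · omega
    · exact G.irrefl h


namespace SimpleGraph

variable {V : Type*} {G : SimpleGraph V}

def PreconnectedComplCofinal (G : SimpleGraph V) : Prop :=
  ∀ K : Finset V, ∃ L : Finset V, K ⊆ L ∧ (G.induce (L : Set V)ᶜ).Preconnected

theorem componentComplMk_eq_of_preconnected_induce_compl {K L : Set V} (hKL : K ⊆ L)
    (hL : (G.induce Lᶜ).Preconnected) {u v : V} (hu : u ∉ L) (hv : v ∉ L) :
    G.componentComplMk (K := K) (fun h => hu (hKL h)) = G.componentComplMk (fun h => hv (hKL h)) :=
  ConnectedComponent.sound <|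
    (hL ⟨u, hu⟩ ⟨v, hv⟩).map (induceHomOfLE G (Set.compl_subset_compl.2 hKL)).toHom

open CategoryTheory in
theorem PreconnectedComplCofinal.subsingleton_end (h : G.PreconnectedComplCofinal) :
    Subsingleton G.end := by
  refine ⟨fun s t => Subtype.ext (funext fun K => ?_)⟩
  obtain ⟨L, hKL, hL⟩ := h K.unop
  have : Subsingleton (G.ComponentCompl L) := hL.subsingleton_connectedComponent
  rw [← s.2 (opHomOfLE hKL), ← t.2 (opHomOfLE hKL)]
  exact congrArg _ (Subsingleton.elim (α := G.ComponentCompl L) _ _)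

open CategoryTheory in
theorem PreconnectedComplCofinal.nonempty_end [Infinite V] (h : G.PreconnectedComplCofinal) :
    Nonempty G.end := by
  classical
  choose L hKL hL using h
  choose v hv using fun K => Infinite.exists_notMem_finset (L K)
  refine ⟨⟨fun K => G.componentComplMk (fun hK => hv K.unop (hKL K.unop hK)), fun {K K'} f => ?_⟩⟩
  have hK'K : K'.unop ⊆ K.unop := le_of_op_hom f
  obtain ⟨w, hw⟩ := Infinite.exists_notMem_finset (L K.unop ∪ L K'.unop)
  rw [Finset.mem_union, not_or] at hw
  refine (ComponentCompl.hom_mk _ hK'K).trans ?_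
  calc G.componentComplMk _
      = G.componentComplMk (K := K'.unop) (fun h => hw.1 (hKL _ (hK'K h))) :=
        componentComplMk_eq_of_preconnected_induce_compl (hK'K.trans (hKL _)) (hL _) (hv _) hw.1
    _ = _ := componentComplMk_eq_of_preconnected_induce_compl (hKL _) (hL _) hw.2 (hv _)

theorem Reachable.induce_of_hom {W : Type*} {H : SimpleGraph W} {s : Set V} (φ : H →g G)
    (hφ : ∀ x, φ x ∈ s) {x y : W} (h : H.Reachable x y) :
    (G.induce s).Reachable ⟨φ x, hφ x⟩ ⟨φ y, hφ y⟩ :=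
  h.map (⟨fun x => ⟨φ x, hφ x⟩, φ.map_adj⟩ : H →g G.induce s)

variable {W : Type*} {H : SimpleGraph W}

theorem preconnected_induce_compl_product (hG : G.Preconnected) (hH : H.Preconnected)
    [Infinite V] [Infinite W] (F : Finset V) (E : Finset W) :
    ((G □ H).induce ((F ×ˢ E : Finset (V × W)) : Set (V × W))ᶜ).Preconnected := by
  set S : Set (V × W) := ((F ×ˢ E : Finset (V × W)) : Set (V × W))ᶜ
  have mem_S {x : V × W} : x ∈ S ↔ x.1 ∉ F ∨ x.2 ∉ E := by
    simp only [S, Finset.coe_product, Set.mem_compl_iff, Set.mem_prod, Finset.mem_coe, not_and_or]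
  obtain ⟨a₀, ha₀⟩ := Infinite.exists_notMem_finset F
  obtain ⟨b₀, hb₀⟩ := Infinite.exists_notMem_finset E
  have column {a} (ha : a ∉ F) (b b') :=
    (hH b b').induce_of_hom (s := S) (boxProdRight G H a).toHom fun _ => mem_S.2 (.inl ha)
  have row {b} (hb : b ∉ E) (a a') :=
    (hG a a').induce_of_hom (s := S) (boxProdLeft G H b).toHom fun _ => mem_S.2 (.inr hb)
  have to_base : ∀ x, ((G □ H).induce S).Reachable x ⟨(a₀, b₀), mem_S.2 (.inl ha₀)⟩ := by
    rintro ⟨⟨a, b⟩, hx⟩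
    rcases mem_S.1 hx with ha | hb
    · exact (column ha b b₀).trans (row hb₀ a a₀)
    · exact (row hb a a₀).trans (column ha₀ b b₀)
  exact fun x y => (to_base x).trans (to_base y).symm

theorem preconnectedComplCofinal_boxProd (hG : G.Preconnected) (hH : H.Preconnected)
    [Infinite V] [Infinite W] : (G □ H).PreconnectedComplCofinal := by
  classical
  intro K
  refine ⟨K.image Prod.fst ×ˢ K.image Prod.snd, fun x hx => ?_,
    preconnected_induce_compl_product hG hH _ _⟩
  exact Finset.mem_product.2 ⟨Finset.mem_image_of_mem _ hx, Finset.mem_image_of_mem _ hx⟩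

end SimpleGraph

open SimpleGraph

theorem prodZ_eq_boxProd_hasse {V : Type*} (G : SimpleGraph V) : prodZ G = G □ hasse ℤ := by
  ext x y
  simp only [prodZ, boxProd_adj, hasse_adj, Order.covBy_iff_add_one_eq]
  grind

instance : Infinite CanopyV :=
  Infinite.of_injective (fun n => (⟨n, [], n.zero_le⟩ : CanopyV)) fun _ _ h => (Sigma.mk.inj h).1

theorem canopyTree_reachable_root (n : ℕ) (l : List Bool) (hl : l.length ≤ n) :
    canopyTree.Reachable ⟨n, l, hl⟩ ⟨n, [], n.zero_le⟩ := by
  induction l using List.reverseRecOn with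
  | nil => rfl
  | append_singleton l b ih =>
    have hl' : l.length ≤ n := by simp only [List.length_append] at hl; omega
    have hadj : canopyTree.Adj ⟨n, l ++ [b], hl⟩ ⟨n, l, hl'⟩ := .inl ⟨rfl, b, .inr rfl⟩
    exact hadj.reachable.trans (ih hl')

theorem canopyTree_reachable_ray (n : ℕ) :
    canopyTree.Reachable ⟨n, [], n.zero_le⟩ ⟨0, [], le_rfl⟩ := by
  induction n with
  | zero => rfl
  | succ n ih =>
    have hadj : canopyTree.Adj ⟨n + 1, [], (n + 1).zero_le⟩ ⟨n, [], n.zero_le⟩ :=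
      .inr ⟨rfl, rfl, .inl rfl⟩
    exact hadj.reachable.trans ih

theorem canopyTree_preconnected : canopyTree.Preconnected := by
  have to_base (x : CanopyV) : canopyTree.Reachable x ⟨0, [], le_rfl⟩ :=
    (canopyTree_reachable_root x.1 x.2.1 x.2.2).trans (canopyTree_reachable_ray x.1)
  exact fun x y => (to_base x).trans (to_base y).symm

/-- the Cartesian product of the canopy tree with `ℤ` has exactly one end. -/
theorem canopy_prod_Z_one_end :
    Nonempty (prodZ canopyTree).end ∧ Subsingleton (prodZ canopyTree).end := by
  have h := preconnectedComplCofinal_boxProd canopyTree_preconnected (hasse_preconnected_of_succ ℤ)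
  rw [prodZ_eq_boxProd_hasse]
  exact ⟨h.nonempty_end, h.subsingleton_end⟩
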